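/- Let Ind and V be finite sets with |Ind| = u ≥ 1 and |V| = v ≥ 2, let X = V^Ind be the vertex set of the Hamming graph H(u,v), and let ε > 0. Define K : X → X → ℝ by K(x,x') = c · e^{−ε·h(x,x')}, where h(x,x') is the Hamming distance (number of coordinates in which x and x' differ) and c = (e^ε / (v − 1 + e^ε))^u. Then K is a channel matrix from X to X, K satisfies ε-differential privacy with respect to the Hamming graph, and its min-entropy leakage under the uniform input distribution equals the optimal bound: log₂(Σ_{x'∈X} max_{x∈X} K(x,x')) = u · log₂(v·e^ε / (v − 1 + e^ε)). -/

import Mathlib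

/-! The weight `exp (-ε d(x, y))` is a product over the coordinates of `1` or `exp (-ε)`, so every
row of `K` sums to `c (1 + (v - 1) e^{-ε})^u = 1`. The triangle inequality for the Hamming distance
gives the privacy bound across an edge. Each column `y` of `K` is maximal on the diagonal, where it
equals `c`; the leakage is therefore `log₂ (v^u c)`. -/

open Finset

/-- The Hamming graph on `Ind → V`: two tuples are adjacent iff they differ in
exactly one coordinate. -/
def hammingGraph (Ind V : Type*) [Fintype Ind] [DecidableEq V] : SimpleGraph (Ind → V) where
  Adj x y := hammingDist x y = 1
  symm := ⟨fun x y h => (hammingDist_comm y x).trans h⟩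
  loopless := ⟨fun x h => by simp [hammingDist_self] at h⟩

/-- `ε`-differential privacy of a channel matrix with respect to a graph. -/
def SatisfiesDP {A B : Type*} (G : SimpleGraph A) (ε : ℝ) (M : A → B → ℝ) : Prop :=
  ∀ (b : B) (a a' : A), G.Adj a a' → M a b ≤ Real.exp ε * M a' b

open Real

section Hamming

variable {ι β : Type*} [Fintype ι] [DecidableEq β]

theorem pow_hammingDist_eq_prod {M : Type*} [CommMonoid M] (r : M) (x y : ι → β) :
    r ^ hammingDist x y = ∏ i, if x i = y i then 1 else r := by
  rw [prod_ite, prod_const_one, one_mul, prod_const]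
  rfl

theorem sum_ite_eq_one_add_card_sub_one_mul [Fintype β] {R : Type*} [CommRing R] (b : β)
    (r : R) : ∑ a, (if b = a then 1 else r) = 1 + (Fintype.card β - 1) * r := by
  rw [Fintype.sum_eq_add_sum_compl b, if_pos rfl,
    sum_congr rfl fun a ha => if_neg (by simpa [eq_comm] using ha),
    sum_const, card_compl, card_singleton, nsmul_eq_mul,
    Nat.cast_sub (Fintype.card_pos_iff.mpr ⟨b⟩), Nat.cast_one]

theorem sum_pow_hammingDist [DecidableEq ι] [Fintype β] {R : Type*} [CommRing R] (r : R)
    (x : ι → β) : ∑ y, r ^ hammingDist x y = (1 + (Fintype.card β - 1) * r) ^ Fintype.card ι := by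
  simp_rw [pow_hammingDist_eq_prod, ← Fintype.prod_sum (fun i a => if x i = a then 1 else r),
    sum_ite_eq_one_add_card_sub_one_mul, prod_const, card_univ]

end Hamming

noncomputable def hammingChannel (ι β : Type*) [Fintype ι] [Fintype β] [DecidableEq β] (ε : ℝ)
    (x y : ι → β) : ℝ :=
  (exp ε / (Fintype.card β - 1 + exp ε)) ^ Fintype.card ι * exp (-(ε * hammingDist x y))

theorem card_sub_one_add_exp_pos (β : Type*) [Fintype β] [Nonempty β] (ε : ℝ) :
    0 < (Fintype.card β : ℝ) - 1 + exp ε := by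
  have : (1 : ℝ) ≤ Fintype.card β := by exact_mod_cast Fintype.card_pos
  linarith [exp_pos ε]

section Channel

variable {ι β : Type*} [Fintype ι] [Fintype β] [DecidableEq β] [Nonempty β]

theorem hammingChannel_nonneg (ε : ℝ) (x y : ι → β) : 0 ≤ hammingChannel ι β ε x y := by
  have := card_sub_one_add_exp_pos β ε
  unfold hammingChannel
  positivity

theorem sum_hammingChannel [DecidableEq ι] (ε : ℝ) (x : ι → β) :
    ∑ y, hammingChannel ι β ε x y = 1 := by
  have hexp : ∀ y, exp (-(ε * hammingDist x y)) = exp (-ε) ^ hammingDist x y := fun y => by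
    rw [← exp_nat_mul]; ring_nf
  have hbase :
      exp ε / (Fintype.card β - 1 + exp ε) * (1 + (Fintype.card β - 1) * exp (-ε)) = 1 := by
    have := (card_sub_one_add_exp_pos β ε).ne'
    rw [exp_neg]
    field_simp
    ring
  simp_rw [hammingChannel, ← mul_sum, hexp, sum_pow_hammingDist, ← mul_pow, hbase, one_pow]

theorem satisfiesDP_hammingChannel {ε : ℝ} (hε : 0 ≤ ε) :
    SatisfiesDP (hammingGraph ι β) ε (hammingChannel ι β ε) := by
  intro y x x' hadj
  have htri : (hammingDist x' y : ℝ) ≤ hammingDist x y + 1 := by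
    have := hammingDist_triangle x' x y
    rw [hammingDist_comm x' x, show hammingDist x x' = 1 from hadj] at this
    exact_mod_cast (by omega)
  have := card_sub_one_add_exp_pos β ε
  unfold hammingChannel
  rw [mul_left_comm, ← exp_add]
  gcongr
  linarith [mul_le_mul_of_nonneg_left htri hε]

theorem hammingChannel_le_self {ε : ℝ} (hε : 0 ≤ ε) (x y : ι → β) :
    hammingChannel ι β ε x y ≤ hammingChannel ι β ε y y := by
  unfold hammingChannel
  rw [hammingDist_self, Nat.cast_zero, mul_zero, neg_zero]
  gcongr
  · have := card_sub_one_add_exp_pos β ε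
    positivity
  · exact neg_nonpos.mpr (by positivity)

theorem sum_sup'_hammingChannel [DecidableEq ι] {ε : ℝ} (hε : 0 ≤ ε) :
    ∑ y, univ.sup' univ_nonempty (fun x => hammingChannel ι β ε x y) =
      (Fintype.card β * exp ε / (Fintype.card β - 1 + exp ε)) ^ Fintype.card ι := by
  have hsup (y : ι → β) :
      univ.sup' univ_nonempty (hammingChannel ι β ε · y) = hammingChannel ι β ε y y :=
    le_antisymm (sup'_le _ _ fun x _ => hammingChannel_le_self hε x y)
      (le_sup' (hammingChannel ι β ε · y) (mem_univ y))
  simp_rw [hsup, hammingChannel, hammingDist_self, Nat.cast_zero, mul_zero, neg_zero, exp_zero,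
    mul_one, sum_const, card_univ, Fintype.card_fun, nsmul_eq_mul, Nat.cast_pow, ← mul_pow,
    mul_div_assoc]

end Channel

theorem stmt7_general {Ind V : Type*} [Fintype Ind] [DecidableEq Ind] [Fintype V] [DecidableEq V]
    [Nonempty V]
    (u v : ℕ) (hu : Fintype.card Ind = u)
    (hv : Fintype.card V = v)
    (ε : ℝ) (hε : 0 < ε)
    (c : ℝ) (hc : c = (Real.exp ε / ((v : ℝ) - 1 + Real.exp ε)) ^ u)
    (K : (Ind → V) → (Ind → V) → ℝ)
    (hK : ∀ x x' : Ind → V, K x x' = c * Real.exp (-(ε * hammingDist x x'))) :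
    (∀ x x' : Ind → V, 0 ≤ K x x') ∧
    (∀ x : Ind → V, ∑ x', K x x' = 1) ∧
    SatisfiesDP (hammingGraph Ind V) ε K ∧
    Real.logb 2 (∑ x', Finset.univ.sup' Finset.univ_nonempty (fun x => K x x'))
      = (u : ℝ) * Real.logb 2 ((v : ℝ) * Real.exp ε / ((v : ℝ) - 1 + Real.exp ε)) := by
  subst hu hv hc
  obtain rfl : K = hammingChannel Ind V ε := funext₂ hK
  refine ⟨hammingChannel_nonneg ε, sum_hammingChannel ε, satisfiesDP_hammingChannel hε.le, ?_⟩
  rw [sum_sup'_hammingChannel hε.le, logb_pow]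

theorem stmt7 {Ind V : Type*} [Fintype Ind] [DecidableEq Ind] [Fintype V] [DecidableEq V]
    [Nonempty V]
    (u v : ℕ) (hu : Fintype.card Ind = u) (hu1 : 1 ≤ u)
    (hv : Fintype.card V = v) (hv2 : 2 ≤ v)
    (ε : ℝ) (hε : 0 < ε)
    (c : ℝ) (hc : c = (Real.exp ε / ((v : ℝ) - 1 + Real.exp ε)) ^ u)
    (K : (Ind → V) → (Ind → V) → ℝ)
    (hK : ∀ x x' : Ind → V, K x x' = c * Real.exp (-(ε * hammingDist x x'))) :
    (∀ x x' : Ind → V, 0 ≤ K x x') ∧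
    (∀ x : Ind → V, ∑ x', K x x' = 1) ∧
    SatisfiesDP (hammingGraph Ind V) ε K ∧
    Real.logb 2 (∑ x', Finset.univ.sup' Finset.univ_nonempty (fun x => K x x'))
      = (u : ℝ) * Real.logb 2 ((v : ℝ) * Real.exp ε / ((v : ℝ) - 1 + Real.exp ε)) :=
  stmt7_general u v hu hv ε hε c hc K hK
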